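/- arXiv:math/0509100 — 8 statements merged into one kernel-verified Lean document; each statement's English description precedes it below -/
import Mathlib

section
/- For all positive integers n and m, f(n+m) ≤ f(n)·f(m), where f(d) denotes the smallest number of cubes in a non-extendible cube packing of dimension d. -/
/-- Two cube centers in `{0,1,2,3}^d` (modeled as `(ZMod 4)^d`) overlap iff
no coordinate differs by exactly 2 modulo 4. -/
def Overlap {d : ℕ} (x y : Fin d → ZMod 4) : Prop := ∀ i, x i - y i ≠ 2

/-- A cube packing: pairwise non-overlapping centers. -/
def IsPacking {d : ℕ} (P : Finset (Fin d → ZMod 4)) : Prop :=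
  ∀ x ∈ P, ∀ y ∈ P, x ≠ y → ¬ Overlap x y

/-- Non-extendible cube packing: no vector outside can be added. -/
def IsNonExtendible {d : ℕ} (P : Finset (Fin d → ZMod 4)) : Prop :=
  IsPacking P ∧ ∀ v : Fin d → ZMod 4, v ∉ P → ∃ x ∈ P, Overlap v x

/-- Blocking set: every vector overlaps some element of `S`. -/
def IsBlocking {d : ℕ} (S : Finset (Fin d → ZMod 4)) : Prop :=
  ∀ v : Fin d → ZMod 4, ∃ s ∈ S, Overlap v s

/-- `f d`: minimal number of cubes in a non-extendible cube packing. -/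
noncomputable def f (d : ℕ) : ℕ :=
  sInf {n | ∃ P : Finset (Fin d → ZMod 4), IsNonExtendible P ∧ P.card = n}

/-- `h d`: minimal size of a blocking set. -/
noncomputable def hBlock (d : ℕ) : ℕ :=
  sInf {n | ∃ S : Finset (Fin d → ZMod 4), IsBlocking S ∧ S.card = n}

lemma exists_nonext (d : ℕ) : ∃ P : Finset (Fin d → ZMod 4), IsNonExtendible P := by
  refine ⟨Fintype.piFinset (fun _ => ({0,2} : Finset (ZMod 4))), ?_, ?_⟩
  · intro x hx y hy hxy hov
    simp only [Fintype.mem_piFinset, Finset.mem_insert, Finset.mem_singleton] at hx hy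
    obtain ⟨i, hi⟩ := Function.ne_iff.mp hxy
    exact hov i (by rcases hx i with h1|h1 <;> rcases hy i with h2|h2 <;>
      simp [h1,h2] at hi ⊢ <;> decide)
  · intro v _
    refine ⟨fun i => if v i = 2 then 2 else 0, ?_, ?_⟩
    · simp only [Fintype.mem_piFinset]
      intro i; split <;> simp
    · intro i
      by_cases h : v i = 2
      · simp [h]; decide
      · simp [h]

lemma overlap_refl {d : ℕ} (x : Fin d → ZMod 4) : Overlap x x := by
  intro i; simp; decide

lemma append_eq {n m : ℕ} (v : Fin (n + m) → ZMod 4) :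
    Fin.append (v ∘ Fin.castAdd m) (v ∘ Fin.natAdd n) = v := by
  funext i
  refine Fin.addCases (fun j => ?_) (fun j => ?_) i
  · simp [Fin.append_left]
  · simp [Fin.append_right]

theorem f_submultiplicative (n m : ℕ) (hn : 1 ≤ n) (hm : 1 ≤ m) :
    f (n + m) ≤ f n * f m := by
  have hne : ∀ d : ℕ, {k | ∃ P : Finset (Fin d → ZMod 4), IsNonExtendible P ∧ P.card = k}.Nonempty := by
    intro d
    obtain ⟨P, hP⟩ := exists_nonext d
    exact ⟨P.card, P, hP, rfl⟩
  obtain ⟨P, hP, hPc⟩ := Nat.sInf_mem (hne n)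
  obtain ⟨Q, hQ, hQc⟩ := Nat.sInf_mem (hne m)
  set R : Finset (Fin (n + m) → ZMod 4) :=
    (P ×ˢ Q).image (fun pq => Fin.append pq.1 pq.2) with hR
  have hmem : ∀ {p q}, p ∈ P → q ∈ Q → Fin.append p q ∈ R := by
    intro p q hp hq
    exact Finset.mem_image.mpr ⟨(p, q), Finset.mem_product.mpr ⟨hp, hq⟩, rfl⟩
  have hinj : Set.InjOn (fun pq : (Fin n → ZMod 4) × (Fin m → ZMod 4) => Fin.append pq.1 pq.2)
      ↑(P ×ˢ Q) := by
    intro ⟨p, q⟩ _ ⟨p', q'⟩ _ h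
    simp only at h
    have h1 : p = p' := by funext j; have := congrFun h (Fin.castAdd m j); simpa [Fin.append_left] using this
    have h2 : q = q' := by funext j; have := congrFun h (Fin.natAdd n j); simpa [Fin.append_right] using this
    simp [h1, h2]
  have hcard : R.card = f n * f m := by
    rw [hR, Finset.card_image_of_injOn hinj, Finset.card_product, hPc, hQc]; rfl
  have hNE : IsNonExtendible R := by
    constructor
    · rintro x hx y hy hxy hov
      obtain ⟨⟨p, q⟩, hpq, rfl⟩ := Finset.mem_image.mp hx
      obtain ⟨⟨p', q'⟩, hpq', rfl⟩ := Finset.mem_image.mp hy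
      obtain ⟨hp, hq⟩ := Finset.mem_product.mp hpq
      obtain ⟨hp', hq'⟩ := Finset.mem_product.mp hpq'
      by_cases hpp : p = p'
      · subst hpp
        have hqq : q ≠ q' := by
          intro h; exact hxy (by rw [h])
        have := hQ.1 q hq q' hq' hqq
        rw [Overlap] at this; push_neg at this
        obtain ⟨j, hj⟩ := this
        exact hov (Fin.natAdd n j) (by simpa [Fin.append_right] using hj)
      · have := hP.1 p hp p' hp' hpp
        rw [Overlap] at this; push_neg at this
        obtain ⟨j, hj⟩ := this
        exact hov (Fin.castAdd m j) (by simpa [Fin.append_left] using hj)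
    · intro v hv
      set v1 := v ∘ Fin.castAdd m
      set v2 := v ∘ Fin.natAdd n
      have hx : ∃ x ∈ P, Overlap v1 x := by
        by_cases h : v1 ∈ P
        · exact ⟨v1, h, overlap_refl v1⟩
        · exact hP.2 v1 h
      have hy : ∃ y ∈ Q, Overlap v2 y := by
        by_cases h : v2 ∈ Q
        · exact ⟨v2, h, overlap_refl v2⟩
        · exact hQ.2 v2 h
      obtain ⟨x, hxP, hxo⟩ := hx
      obtain ⟨y, hyQ, hyo⟩ := hy
      refine ⟨Fin.append x y, hmem hxP hyQ, ?_⟩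
      intro i
      refine Fin.addCases (fun j => ?_) (fun j => ?_) i
      · simpa [Fin.append_left, v1] using hxo j
      · simpa [Fin.append_right, v2] using hyo j
  calc f (n + m) ≤ R.card := Nat.sInf_le ⟨R, hNE, rfl⟩
    _ = f n * f m := hcard
end

section
/- If N is a nonnegative integer satisfying ⌊3N/4⌋ < h(d), then h(d+1) > N, where h(d) is the minimal size of a blocking set in dimension d. -/
/-!
Split a blocking set `S` in dimension `d + 1` according to the last coordinate. For each
`j : ZMod 4`, the elements of `S` whose last coordinate is not `j`, with that coordinate dropped,
form a blocking set in dimension `d`: a vector `w` is blocked through `(w, j + 2)`, which cannot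
overlap an element ending in `j`. Hence `h(d) + #{s ∈ S | s last = j} ≤ #S` for each of the four `j`, and
summing gives `4 h(d) ≤ 3 #S`.
-/

open Finset

lemma isBlocking_univ (d : ℕ) : IsBlocking (univ : Finset (Fin d → ZMod 4)) :=
  fun v => ⟨v, mem_univ v, fun i => by rw [sub_self]; decide⟩

lemma IsBlocking.hBlock_le {d : ℕ} {S : Finset (Fin d → ZMod 4)} (hS : IsBlocking S) :
    hBlock d ≤ S.card :=
  Nat.sInf_le ⟨S, hS, rfl⟩

lemma exists_isBlocking_card_eq_hBlock (d : ℕ) :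
    ∃ S : Finset (Fin d → ZMod 4), IsBlocking S ∧ S.card = hBlock d :=
  Nat.sInf_mem (s := {n | ∃ S : Finset (Fin d → ZMod 4), IsBlocking S ∧ S.card = n})
    ⟨_, univ, isBlocking_univ d, rfl⟩

lemma IsBlocking.image_init_filter_last_ne {d : ℕ} {S : Finset (Fin (d + 1) → ZMod 4)}
    (hS : IsBlocking S) (j : ZMod 4) :
    IsBlocking ((S.filter fun s => s (Fin.last d) ≠ j).image Fin.init) := by
  intro w
  obtain ⟨s, hsS, hov⟩ := hS (Fin.snoc w (j + 2))
  refine ⟨Fin.init s, mem_image_of_mem _ (mem_filter.2 ⟨hsS, fun hs => ?_⟩), fun i => ?_⟩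
  · exact hov (Fin.last d) (by rw [Fin.snoc_last, hs]; ring)
  · simpa only [Fin.init, Fin.snoc_castSucc] using hov i.castSucc

lemma IsBlocking.hBlock_add_card_filter_last_eq_le {d : ℕ} {S : Finset (Fin (d + 1) → ZMod 4)}
    (hS : IsBlocking S) (j : ZMod 4) :
    hBlock d + (S.filter fun s => s (Fin.last d) = j).card ≤ S.card := by
  have hle := (hS.image_init_filter_last_ne j).hBlock_le.trans card_image_le
  have hsplit := card_filter_add_card_filter_not (s := S) (fun s => s (Fin.last d) = j)
  simp only [← ne_eq] at hsplit
  omega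

lemma IsBlocking.four_mul_hBlock_le {d : ℕ} {S : Finset (Fin (d + 1) → ZMod 4)}
    (hS : IsBlocking S) :
    4 * hBlock d ≤ 3 * S.card := by
  have hsum : ∑ j : ZMod 4, (hBlock d + (S.filter fun s => s (Fin.last d) = j).card)
      ≤ ∑ _j : ZMod 4, S.card :=
    sum_le_sum fun j _ => hS.hBlock_add_card_filter_last_eq_le j
  rw [sum_add_distrib, ← card_eq_sum_card_fiberwise fun _ _ => mem_univ _] at hsum
  simp only [sum_const, card_univ, ZMod.card, smul_eq_mul] at hsum
  omega

lemma four_mul_hBlock_le_three_mul_hBlock_succ (d : ℕ) :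
    4 * hBlock d ≤ 3 * hBlock (d + 1) := by
  obtain ⟨S, hS, hcard⟩ := exists_isBlocking_card_eq_hBlock (d + 1)
  exact hcard ▸ hS.four_mul_hBlock_le

theorem hBlock_key_lemma (d N : ℕ) (hN : 3 * N / 4 < hBlock d) :
    N < hBlock (d + 1) := by
  have := four_mul_hBlock_le_three_mul_hBlock_succ d
  omega
end

section
/- For any d ≥ 1, h(d+1) ≥ ⌊(4·h(d) − 1)/3⌋ + 1, where h(d) is the minimal size of a blocking set in dimension d. -/
lemma univ_blocking (d : ℕ) : IsBlocking (Finset.univ : Finset (Fin d → ZMod 4)) := by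
  intro v
  exact ⟨v, Finset.mem_univ v, fun i => by rw [sub_self]; decide⟩

lemma blockSet_nonempty (d : ℕ) :
    {n | ∃ S : Finset (Fin d → ZMod 4), IsBlocking S ∧ S.card = n}.Nonempty :=
  ⟨_, Finset.univ, univ_blocking d, rfl⟩

lemma hBlock_pos (d : ℕ) : 1 ≤ hBlock d := by
  rw [Nat.one_le_iff_ne_zero]
  intro h0
  have hmem : hBlock d ∈ {n | ∃ S : Finset (Fin d → ZMod 4), IsBlocking S ∧ S.card = n} :=
    Nat.sInf_mem (blockSet_nonempty d)
  obtain ⟨S, hS, hcard⟩ := hmem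
  rw [h0, Finset.card_eq_zero] at hcard
  obtain ⟨s, hs, _⟩ := hS 0
  simp [hcard] at hs

lemma zmod4_cases (a b : ZMod 4) (h : a - b ≠ 2) : b = a - 1 ∨ b = a ∨ b = a + 1 := by
  revert h; revert a b; decide

lemma fiber_block {d : ℕ} (T : Finset (Fin (d+1) → ZMod 4)) (hT : IsBlocking T) (a : ZMod 4) :
    hBlock d ≤ (T.filter (fun x => x (Fin.last d) = a - 1)).card
      + (T.filter (fun x => x (Fin.last d) = a)).card
      + (T.filter (fun x => x (Fin.last d) = a + 1)).card := by
  set S := ((T.filter (fun x => x (Fin.last d) = a - 1)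
      ∪ T.filter (fun x => x (Fin.last d) = a)
      ∪ T.filter (fun x => x (Fin.last d) = a + 1)).image
      (fun x => x ∘ Fin.castSucc)) with hSdef
  have hS : IsBlocking S := by
    intro v
    obtain ⟨s, hs, hov⟩ := hT (Fin.snoc v a)
    have h2 : a - s (Fin.last d) ≠ 2 := by
      have := hov (Fin.last d)
      simpa [Fin.snoc_last] using this
    have hlast := zmod4_cases a (s (Fin.last d)) h2
    refine ⟨s ∘ Fin.castSucc, ?_, ?_⟩
    · apply Finset.mem_image_of_mem
      simp only [Finset.mem_union, Finset.mem_filter]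
      tauto
    · intro i
      have := hov (Fin.castSucc i)
      simpa [Fin.snoc_castSucc] using this
  have h1 : hBlock d ≤ S.card := Nat.sInf_le ⟨S, hS, rfl⟩
  calc hBlock d ≤ S.card := h1
    _ ≤ _ := by
        refine le_trans Finset.card_image_le ?_
        refine le_trans (Finset.card_union_le _ _) ?_
        exact Nat.add_le_add_right (Finset.card_union_le _ _) _

theorem hBlock_lower_bound (d : ℕ) (hd : 1 ≤ d) :
    (4 * hBlock d - 1) / 3 + 1 ≤ hBlock (d + 1) := by
  have hmem : hBlock (d+1) ∈ {n | ∃ S : Finset (Fin (d+1) → ZMod 4), IsBlocking S ∧ S.card = n} :=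
    Nat.sInf_mem (blockSet_nonempty (d+1))
  obtain ⟨T, hT, hcard⟩ := hmem
  have hpart : T.card = ∑ a : ZMod 4, (T.filter (fun x => x (Fin.last d) = a)).card :=
    Finset.card_eq_sum_card_fiberwise (fun x _ => Finset.mem_univ _)
  have hsum : T.card = (T.filter (fun x => x (Fin.last d) = 0)).card
      + (T.filter (fun x => x (Fin.last d) = 1)).card
      + (T.filter (fun x => x (Fin.last d) = 2)).card
      + (T.filter (fun x => x (Fin.last d) = 3)).card := by
    rw [hpart]
    exact Fin.sum_univ_four _
  have h0 := fiber_block T hT 0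
  have h1 := fiber_block T hT 1
  have h2 := fiber_block T hT 2
  have h3 := fiber_block T hT 3
  rw [show (0:ZMod 4) - 1 = 3 by decide, show (0:ZMod 4) + 1 = 1 by decide] at h0
  rw [show (1:ZMod 4) - 1 = 0 by decide, show (1:ZMod 4) + 1 = 2 by decide] at h1
  rw [show (2:ZMod 4) - 1 = 1 by decide, show (2:ZMod 4) + 1 = 3 by decide] at h2
  rw [show (3:ZMod 4) - 1 = 2 by decide, show (3:ZMod 4) + 1 = 0 by decide] at h3
  have hp := hBlock_pos d
  set c0 := (T.filter (fun x => x (Fin.last d) = 0)).card with hc0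
  set c1 := (T.filter (fun x => x (Fin.last d) = 1)).card with hc1
  set c2 := (T.filter (fun x => x (Fin.last d) = 2)).card with hc2
  set c3 := (T.filter (fun x => x (Fin.last d) = 3)).card with hc3
  clear_value c0 c1 c2 c3
  clear * - h0 h1 h2 h3 hsum hp hcard
  omega
end

section
/- The minimal size of a blocking set in dimension 2 is h(2) = 3. -/
/-- Listing `S` as `s₀, s₁, …`, the vector `v i = sᵢ i + 2` overlaps no `sᵢ` as long as every
index `i` is a coordinate. -/
theorem IsBlocking.dim_lt_card {d : ℕ} {S : Finset (Fin d → ZMod 4)} (hS : IsBlocking S) :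
    d < S.card := by
  by_contra! hcard
  obtain ⟨s, hs, hov⟩ := hS fun i => (S.toList.getD i 0) i + 2
  obtain ⟨k, hk, rfl⟩ := List.getElem_of_mem (Finset.mem_toList.mpr hs)
  have hkd : k < d := (S.length_toList ▸ hk).trans_le hcard
  exact hov ⟨k, hkd⟩ (by simp [List.getElem?_eq_getElem hk])

theorem isBlocking_two : IsBlocking ({![0, 0], ![1, 2], ![2, 1]} : Finset (Fin 2 → ZMod 4)) := by
  unfold IsBlocking Overlap
  decide

theorem hBlock_two : hBlock 2 = 3 := by
  have hmem : 3 ∈ {n | ∃ S : Finset (Fin 2 → ZMod 4), IsBlocking S ∧ S.card = n} :=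
    ⟨_, isBlocking_two, by decide⟩
  refine le_antisymm (Nat.sInf_le hmem) (le_csInf ⟨3, hmem⟩ ?_)
  rintro n ⟨S, hS, rfl⟩
  exact hS.dim_lt_card
end

section
/- The minimal size of a blocking set in dimension 3 is h(3) = 4. -/
variable {d : ℕ}

/-- Give each element `s` of `S` its own coordinate `e s` and set `v (e s) := s (e s) + 2`. -/
theorem IsBlocking.lt_card {S : Finset (Fin d → ZMod 4)} (hS : IsBlocking S) : d < S.card := by
  by_contra! hcard
  obtain ⟨e⟩ : Nonempty (S ↪ Fin d) :=
    Function.Embedding.nonempty_of_card_le (by simpa using hcard)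
  set v : Fin d → ZMod 4 := Function.extend e (fun s => (s : Fin d → ZMod 4) (e s) + 2) 0
  obtain ⟨s, hs, hvs⟩ := hS v
  have hv : v (e ⟨s, hs⟩) = s (e ⟨s, hs⟩) + 2 := e.injective.extend_apply _ _ _
  exact hvs (e ⟨s, hs⟩) (by rw [hv]; ring)

/-- A vector `v` fails to overlap the constant vector `t` only if `t = v i - 2` for some `i`,
which rules out at most `d` values of `t`. -/
theorem isBlocking_image_const {T : Finset (ZMod 4)} (hT : d < T.card) :
    IsBlocking (T.image fun t (_ : Fin d) => t) := by
  intro v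
  have hexcl : (Finset.univ.image fun i => v i - 2).card < T.card :=
    (Finset.card_image_le.trans (by simp)).trans_lt hT
  obtain ⟨t, htT, ht⟩ := Finset.exists_mem_notMem_of_card_lt_card hexcl
  refine ⟨fun _ => t, Finset.mem_image_of_mem _ htT, fun i hi => ht ?_⟩
  exact Finset.mem_image.mpr ⟨i, Finset.mem_univ i, by rw [← hi]; ring⟩

theorem hBlock_eq_succ (hd : d ≤ 3) : hBlock d = d + 1 := by
  obtain ⟨T, -, hT⟩ := Finset.exists_subset_card_eq (s := (Finset.univ : Finset (ZMod 4)))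
    (n := d + 1) (by simp; omega)
  have hmem : (T.image fun t (_ : Fin d) => t).card ∈
      {n | ∃ S : Finset (Fin d → ZMod 4), IsBlocking S ∧ S.card = n} :=
    ⟨_, isBlocking_image_const (by omega), rfl⟩
  refine le_antisymm ((Nat.sInf_le hmem).trans (hT ▸ Finset.card_image_le)) ?_
  exact le_csInf ⟨_, hmem⟩ fun n ⟨S, hS, hcard⟩ => hcard ▸ hS.lt_card

theorem hBlock_three : hBlock 3 = 4 :=
  hBlock_eq_succ le_rfl
end

section
/- If CP is a d-dimensional cube packing with 2^d − δ cubes, then for any coordinate i and any layer j ∈ {0,1,2,3}, the induced cube packing on layer j has at least 2^{d−1} − δ cubes. -/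
/-- The induced cube packing on coordinate `i`, layer `j`: keep cubes whose
`i`-th coordinate is `j` or `j+1` and delete the `i`-th coordinate. -/
def inducedPacking {d : ℕ} (P : Finset (Fin (d + 1) → ZMod 4))
    (i : Fin (d + 1)) (j : ZMod 4) : Finset (Fin d → ZMod 4) :=
  (P.filter (fun x => x i = j ∨ x i = j + 1)).image (fun x => x ∘ i.succAbove)

lemma overlap_key : ∀ p a b : ZMod 4, a - b = 2 → (p = a ∨ p = a + 1) →
    (p = b ∨ p = b + 1) → False := by decide

lemma layer_key : ∀ a b c : ZMod 4, (a = c ∨ a = c + 1) → (b = c ∨ b = c + 1) →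
    a - b ≠ 2 := by decide

lemma neg_layer_key : ∀ a j : ZMod 4, ¬(a = j ∨ a = j + 1) ↔
    (a = j + 2 ∨ a = j + 2 + 1) := by decide

def cube {d : ℕ} (x : Fin d → ZMod 4) : Finset (Fin d → ZMod 4) :=
  Fintype.piFinset (fun i => {x i, x i + 1})

lemma card_cube {d : ℕ} (x : Fin d → ZMod 4) : (cube x).card = 2 ^ d := by
  have h : ∀ i, ({x i, x i + 1} : Finset (ZMod 4)).card = 2 := by
    intro i
    exact Finset.card_pair (fun h => (by decide : (1 : ZMod 4) ≠ 0) (left_eq_add.mp h))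
  rw [cube, Fintype.card_piFinset]
  rw [Finset.prod_congr rfl (fun i _ => h i), Finset.prod_const, Finset.card_univ,
    Fintype.card_fin]

lemma packing_card_le {d : ℕ} {P : Finset (Fin d → ZMod 4)} (hP : IsPacking P) :
    P.card ≤ 2 ^ d := by
  classical
  have hdisj : ∀ x ∈ P, ∀ y ∈ P, x ≠ y → Disjoint (cube x) (cube y) := by
    intro x hx y hy hxy
    have hno := hP x hx y hy hxy
    rw [Overlap] at hno; push_neg at hno
    obtain ⟨k, hk⟩ := hno
    rw [Finset.disjoint_left]
    intro p hp hq
    rw [cube, Fintype.mem_piFinset] at hp hq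
    have hpk := hp k; have hqk := hq k
    simp only [Finset.mem_insert, Finset.mem_singleton] at hpk hqk
    exact overlap_key (p k) (x k) (y k) hk hpk hqk
  have h1 : (P.biUnion cube).card = P.card * 2 ^ d := by
    rw [Finset.card_biUnion hdisj]
    simp [card_cube]
  have h2 : (P.biUnion cube).card ≤ 2 ^ d * 2 ^ d := by
    calc (P.biUnion cube).card ≤ Fintype.card (Fin d → ZMod 4) :=
          Finset.card_le_univ _
      _ = 2 ^ d * 2 ^ d := by
          simp only [Fintype.card_fun, ZMod.card, Fintype.card_fin, ← mul_pow]
          norm_num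
  have h3 : P.card * 2 ^ d ≤ 2 ^ d * 2 ^ d := h1 ▸ h2
  exact Nat.le_of_mul_le_mul_right h3 (Nat.pow_pos (by norm_num))

theorem induced_packing_card (d δ : ℕ) (P : Finset (Fin (d + 1) → ZMod 4))
    (hP : IsPacking P) (hcard : P.card = 2 ^ (d + 1) - δ)
    (i : Fin (d + 1)) (j : ZMod 4) :
    2 ^ d - δ ≤ (inducedPacking P i j).card := by
  classical
  have inj : ∀ c : ZMod 4, Set.InjOn (fun x : Fin (d + 1) → ZMod 4 => x ∘ i.succAbove)
      ↑(P.filter (fun x => x i = c ∨ x i = c + 1)) := by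
    intro c x hx y hy hproj
    rw [Finset.mem_coe, Finset.mem_filter] at hx hy
    by_contra hne
    apply hP x hx.1 y hy.1 hne
    intro k
    rcases eq_or_ne k i with rfl | hk
    · exact layer_key _ _ c hx.2 hy.2
    · obtain ⟨m, rfl⟩ := Fin.exists_succAbove_eq hk
      have hm : x (i.succAbove m) = y (i.succAbove m) := congrFun hproj m
      rw [hm, sub_self]
      decide
  have imgPack : ∀ c : ZMod 4, IsPacking
      ((P.filter (fun x => x i = c ∨ x i = c + 1)).image (fun x => x ∘ i.succAbove)) := by
    intro c u hu v hv huv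
    obtain ⟨x, hx, rfl⟩ := Finset.mem_image.mp hu
    obtain ⟨y, hy, rfl⟩ := Finset.mem_image.mp hv
    rw [Finset.mem_filter] at hx hy
    have hxy : x ≠ y := fun h => huv (by rw [h])
    have hno := hP x hx.1 y hy.1 hxy
    rw [Overlap] at hno; push_neg at hno
    obtain ⟨k, hk⟩ := hno
    have hki : k ≠ i := fun h => layer_key (x k) (y k) c (h ▸ hx.2) (h ▸ hy.2) hk
    obtain ⟨m, rfl⟩ := Fin.exists_succAbove_eq hki
    intro hov
    exact hov m hk
  set Q := P.filter (fun x => x i = j ∨ x i = j + 1) with hQ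
  set R := P.filter (fun x => ¬(x i = j ∨ x i = j + 1)) with hR
  have hsum : Q.card + R.card = P.card :=
    Finset.card_filter_add_card_filter_not _
  have hR' : R = P.filter (fun x => x i = (j + 2) ∨ x i = (j + 2) + 1) := by
    rw [hR]
    apply Finset.filter_congr
    intro x _
    exact neg_layer_key (x i) j
  have hRcard : R.card ≤ 2 ^ d := by
    have hp := packing_card_le (imgPack (j + 2))
    rwa [Finset.card_image_of_injOn (inj (j + 2)), ← hR'] at hp
  have hQcard : (inducedPacking P i j).card = Q.card := by
    rw [inducedPacking, Finset.card_image_of_injOn (inj j)]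
  have h2 : 2 ^ (d + 1) = 2 ^ d + 2 ^ d := by ring
  omega
end

section
/- For any cube packing CP in dimension d with N cubes, writing N = 4q + r with 0 ≤ r ≤ 3, the second moment satisfies m_2(CP) ≥ m_1(CP) + N(N−1)·2^{−d} + 2^{−d}·d·(2q(q−1) + rq), where m_i(CP) is the average over z ∈ {0,1,2,3}^d of N_z(CP)^i. -/
/-- `N_z(P)`: number of 2-cubes of `P` contained in the 4-cube `z + [0,4)^d`,
i.e. centers `b` with `z i ≠ b i` for every coordinate. -/
def countIn {d : ℕ} (P : Finset (Fin d → ZMod 4)) (z : Fin d → ZMod 4) : ℕ :=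
  (P.filter (fun b => ∀ i, z i ≠ b i)).card

/-- The `k`-th moment of a cube packing: average of `N_z(P)^k`. -/
noncomputable def moment {d : ℕ} (P : Finset (Fin d → ZMod 4)) (k : ℕ) : ℝ :=
  (1 / 4 ^ d) * ∑ z : Fin d → ZMod 4, (countIn P z : ℝ) ^ k

/-!
Expanding `N_z²` counts ordered pairs of cubes `(b, c)` together with a 4-cube `z + [0,4)^d`
containing both; there are `∏ᵢ (3 if bᵢ = cᵢ else 2)` such `z`. The pairs `b = c` contribute
`m₁`. For `b ≠ c` with `e` agreeing coordinates the weight `2^(d-e) 3^e` is at least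
`2^d (1 + e/2)` by Bernoulli's inequality, and in each coordinate the number of ordered pairs
agreeing there is `∑ᵥ nᵥ (nᵥ - 1)` over the four values `v`, which is smallest for the balanced
distribution `nᵥ ∈ {q, q + 1}`.
-/

open Finset

section DoubleCounting

variable {α β : Type*}

lemma card_filter_sq (s : Finset α) (p : α → Prop) [DecidablePred p] :
    #{a ∈ s | p a} ^ 2 = #{x ∈ s ×ˢ s | p x.1 ∧ p x.2} := by
  rw [sq, ← card_product, filter_product]

lemma sum_product_self_eq_add_sum_offDiag {M : Type*} [AddCommMonoid M] [DecidableEq α]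
    (s : Finset α) (g : α × α → M) :
    ∑ x ∈ s ×ˢ s, g x = ∑ a ∈ s, g (a, a) + ∑ x ∈ s.offDiag, g x := by
  rw [← diag_union_offDiag, sum_union (disjoint_diag_offDiag s), sum_diag]

lemma card_filter_comp_eq_eq_sum_sq [Fintype β] [DecidableEq β] (s : Finset α) (f : α → β) :
    #{x ∈ s ×ˢ s | f x.1 = f x.2} = ∑ v, #{a ∈ s | f a = v} ^ 2 := by
  rw [card_eq_sum_card_fiberwise (f := fun x => f x.1) (t := univ)
    fun _ _ => mem_coe.2 (mem_univ _)]
  refine sum_congr rfl fun v _ => ?_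
  rw [card_filter_sq, filter_filter]
  exact congrArg card (filter_congr fun x _ => by grind)

-- `(n - q) (n - q - 1) ≥ 0`, as no integer lies strictly between `q` and `q + 1`.
lemma two_mul_add_one_mul_sub_le_sq (n q : ℕ) :
    (2 * q + 1) * (n : ℝ) - q * (q + 1) ≤ (n : ℝ) ^ 2 := by
  rcases le_or_gt n q with h | h
  · have h' : (n : ℝ) ≤ q := by exact_mod_cast h
    nlinarith
  · have h' : (q : ℝ) + 1 ≤ n := by exact_mod_cast h
    nlinarith

lemma le_card_filter_comp_eq [Fintype β] [DecidableEq β] (s : Finset α) (f : α → β) (q : ℕ) :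
    (2 * q + 1) * (#s : ℝ) - Fintype.card β * (q * (q + 1)) ≤
      #{x ∈ s ×ˢ s | f x.1 = f x.2} := by
  rw [card_filter_comp_eq_eq_sum_sq, card_eq_sum_card_fiberwise (f := f) (t := univ)
    fun _ _ => mem_coe.2 (mem_univ _)]
  push_cast
  rw [mul_sum, ← card_univ, ← nsmul_eq_mul, ← sum_const, ← sum_sub_distrib]
  exact sum_le_sum fun v _ => two_mul_add_one_mul_sub_le_sq _ q

lemma le_card_offDiag_filter_comp_eq [DecidableEq α] [Fintype β] [DecidableEq β]
    (s : Finset α) (f : α → β) (q : ℕ) :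
    2 * q * (#s : ℝ) - Fintype.card β * (q * (q + 1)) ≤ #{x ∈ s.offDiag | f x.1 = f x.2} := by
  have hsplit : #{x ∈ s ×ˢ s | f x.1 = f x.2} = #s + #{x ∈ s.offDiag | f x.1 = f x.2} := by
    simp only [card_filter, sum_product_self_eq_add_sum_offDiag, if_true, sum_const_nat, mul_one]
  have h := le_card_filter_comp_eq s f q
  rw [hsplit] at h
  push_cast at h
  linarith

end DoubleCounting

lemma two_pow_mul_one_add_half_le_three_pow (k : ℕ) : (2 : ℝ) ^ k * (1 + k / 2) ≤ 3 ^ k := by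
  calc (2 : ℝ) ^ k * (1 + k / 2) = 2 ^ k * (1 + k * (1 / 2)) := by ring
    _ ≤ 2 ^ k * (1 + 1 / 2) ^ k := by gcongr; exact one_add_mul_le_pow (by norm_num) k
    _ = 3 ^ k := by rw [← mul_pow]; norm_num

lemma two_pow_mul_le_prod_ite {ι : Type*} [Fintype ι] (p : ι → Prop) [DecidablePred p] :
    (2 : ℝ) ^ Fintype.card ι * (1 + #{i | p i} / 2) ≤ ∏ i, if p i then (3 : ℝ) else 2 := by
  rw [prod_ite, prod_const, prod_const, ← card_univ,
    ← card_filter_add_card_filter_not (s := univ) p, pow_add, mul_right_comm]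
  gcongr
  exact two_pow_mul_one_add_half_le_three_pow _

section CubePacking

variable {d : ℕ}

lemma card_filter_ne_and_ne (a b : ZMod 4) :
    #{v : ZMod 4 | v ≠ a ∧ v ≠ b} = if a = b then 3 else 2 := by
  decide +revert

def pairWeight (b c : Fin d → ZMod 4) : ℕ := ∏ i, if b i = c i then 3 else 2

lemma card_filter_forall_ne_and_ne (b c : Fin d → ZMod 4) :
    #{z : Fin d → ZMod 4 | ∀ i, z i ≠ b i ∧ z i ≠ c i} = pairWeight b c := by
  have h : ({z : Fin d → ZMod 4 | ∀ i, z i ≠ b i ∧ z i ≠ c i} : Finset _) =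
      Fintype.piFinset fun i => {v | v ≠ b i ∧ v ≠ c i} := by
    ext z; simp
  rw [h, Fintype.card_piFinset]
  exact prod_congr rfl fun i _ => card_filter_ne_and_ne _ _

lemma pairWeight_self (b : Fin d → ZMod 4) : pairWeight b b = 3 ^ d := by
  simp [pairWeight]

lemma sum_countIn (P : Finset (Fin d → ZMod 4)) : ∑ z, countIn P z = #P * 3 ^ d := by
  refine (sum_card_bipartiteAbove_eq_sum_card_bipartiteBelow
    (r := fun (z b : Fin d → ZMod 4) => ∀ i, z i ≠ b i)).trans ?_
  refine sum_const_nat fun b _ => ?_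
  rw [← pairWeight_self, ← card_filter_forall_ne_and_ne b b]
  simp only [bipartiteBelow, and_self]

lemma sum_countIn_sq (P : Finset (Fin d → ZMod 4)) :
    ∑ z, countIn P z ^ 2 = ∑ x ∈ P ×ˢ P, pairWeight x.1 x.2 := by
  simp_rw [countIn, card_filter_sq]
  refine (sum_card_bipartiteAbove_eq_sum_card_bipartiteBelow
    (r := fun (z : Fin d → ZMod 4) (x : (Fin d → ZMod 4) × (Fin d → ZMod 4)) =>
      (∀ i, z i ≠ x.1 i) ∧ ∀ i, z i ≠ x.2 i)).trans ?_
  refine sum_congr rfl fun x _ => ?_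
  rw [← card_filter_forall_ne_and_ne]
  simp only [bipartiteBelow, forall_and]

lemma sum_countIn_sq_eq (P : Finset (Fin d → ZMod 4)) :
    ∑ z, countIn P z ^ 2 = ∑ z, countIn P z + ∑ x ∈ P.offDiag, pairWeight x.1 x.2 := by
  rw [sum_countIn_sq, sum_product_self_eq_add_sum_offDiag, sum_countIn,
    sum_const_nat fun b _ => pairWeight_self b]

lemma moment_two_eq (P : Finset (Fin d → ZMod 4)) :
    moment P 2 = moment P 1 + (4 ^ d)⁻¹ * ∑ x ∈ P.offDiag, (pairWeight x.1 x.2 : ℝ) := by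
  simp only [moment, pow_one]
  rw [one_div, ← mul_add]
  exact_mod_cast congrArg (fun n : ℕ => (4 ^ d : ℝ)⁻¹ * n) (sum_countIn_sq_eq P)

lemma two_pow_mul_le_pairWeight (b c : Fin d → ZMod 4) :
    (2 : ℝ) ^ d * (1 + #{i | b i = c i} / 2) ≤ pairWeight b c := by
  simpa [pairWeight] using two_pow_mul_le_prod_ite fun i => b i = c i

lemma le_sum_offDiag_pairWeight (P : Finset (Fin d → ZMod 4)) (q r : ℕ)
    (hP : #P = 4 * q + r) :
    (2 : ℝ) ^ d * (#P * (#P - 1) + d * (2 * q * (q - 1) + r * q)) ≤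
      ∑ x ∈ P.offDiag, (pairWeight x.1 x.2 : ℝ) := by
  have hagree : ∑ x ∈ P.offDiag, #{i | x.1 i = x.2 i} =
      ∑ i, #{x ∈ P.offDiag | x.1 i = x.2 i} :=
    sum_card_bipartiteAbove_eq_sum_card_bipartiteBelow
      (r := fun (x : (Fin d → ZMod 4) × (Fin d → ZMod 4)) i => x.1 i = x.2 i)
  have hcoord (i : Fin d) :
      2 * (2 * q * (q - 1) + r * q : ℝ) ≤ #{x ∈ P.offDiag | x.1 i = x.2 i} := by
    have h := le_card_offDiag_filter_comp_eq P (· i) q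
    rw [hP, ZMod.card] at h
    push_cast at h
    linarith
  have hcoords : (d : ℝ) * (2 * (2 * q * (q - 1) + r * q)) ≤
      ∑ i, (#{x ∈ P.offDiag | x.1 i = x.2 i} : ℝ) := by
    simpa using sum_le_sum (s := univ) fun i _ => hcoord i
  have hoff : (#P.offDiag : ℝ) = #P * (#P - 1) := by
    rw [offDiag_card, Nat.cast_sub (Nat.le_mul_self _)]
    push_cast
    ring
  calc (2 : ℝ) ^ d * (#P * (#P - 1) + d * (2 * q * (q - 1) + r * q))
      ≤ 2 ^ d * (#P.offDiag + (∑ i, (#{x ∈ P.offDiag | x.1 i = x.2 i} : ℝ)) / 2) := by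
        rw [hoff]; gcongr; linarith
    _ = ∑ x ∈ P.offDiag, 2 ^ d * (1 + (#{i | x.1 i = x.2 i} : ℝ) / 2) := by
        rw [← mul_sum, sum_add_distrib, ← sum_div, sum_const, nsmul_one]
        exact_mod_cast congrArg (fun n : ℕ => 2 ^ d * (#P.offDiag + n / 2 : ℝ)) hagree.symm
    _ ≤ _ := sum_le_sum fun x _ => two_pow_mul_le_pairWeight x.1 x.2

end CubePacking

theorem second_moment_lower_bound_general (d N q r : ℕ) (P : Finset (Fin d → ZMod 4))
    (hN : P.card = N) (hqr : N = 4 * q + r) :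
    moment P 1 + (N : ℝ) * (N - 1) * 2 ^ (-(d : ℤ)) +
        2 ^ (-(d : ℤ)) * d * (2 * q * (q - 1) + r * q) ≤
      moment P 2 := by
  subst hN
  have hpairs := le_sum_offDiag_pairWeight P q r hqr
  rw [moment_two_eq, zpow_neg, zpow_natCast]
  calc _ = moment P 1 + (4 ^ d)⁻¹ *
        ((2 : ℝ) ^ d * (#P * (#P - 1) + d * (2 * q * (q - 1) + r * q))) := by
        rw [show (4 : ℝ) ^ d = 2 ^ d * 2 ^ d by rw [← mul_pow]; norm_num]
        field_simp
        ring
    _ ≤ _ := by gcongr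

theorem second_moment_lower_bound (d N q r : ℕ) (P : Finset (Fin d → ZMod 4))
    (hP : IsPacking P) (hN : P.card = N) (hqr : N = 4 * q + r) (hr : r ≤ 3) :
    moment P 1 + (N : ℝ) * (N - 1) * 2 ^ (-(d : ℤ)) +
        2 ^ (-(d : ℤ)) * d * (2 * q * (q - 1) + r * q) ≤
      moment P 2 :=
  second_moment_lower_bound_general d N q r P hN hqr
end

section
/- If two cube centers a, b in {0,1,2,3}^d belong to a common cube packing (so they differ by exactly 2 mod 4 in at least one coordinate) and have exactly μ equal coordinates, then the number of z ∈ {0,1,2,3}^d such that z+[0,4)^d contains both 2-cubes equals (3/2)^μ · 2^d, and this is at least 2^d + 2^{d−1}·μ with equality iff μ ∈ {0,1}. -/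
lemma strict_aux : ∀ n : ℕ, 2 ≤ n → (1 : ℝ) + n / 2 < (3 / 2) ^ n := by
  intro n hn
  induction n with
  | zero => omega
  | succ m ih =>
    rcases Nat.lt_or_ge m 2 with hm | hm
    · interval_cases m
      · omega
      · norm_num
    · have h := ih hm
      have : (3/2 : ℝ) * (1 + m / 2) ≤ (3/2) * (3/2)^m :=
        mul_le_mul_of_nonneg_left h.le (by norm_num)
      push_cast
      calc (1 : ℝ) + (m + 1) / 2 < (3/2) * (1 + m/2) := by
            have : (2:ℝ) ≤ m := by exact_mod_cast hm
            nlinarith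
        _ ≤ (3/2)^(m+1) := by rw [pow_succ]; nlinarith [pow_pos (by norm_num : (0:ℝ) < 3/2) m]

theorem common_fourcube_count (d : ℕ) (a b : Fin d → ZMod 4)
    (hab : ∃ i, a i - b i = 2)
    (μ : ℕ) (hμ : μ = (Finset.univ.filter (fun i : Fin d => a i = b i)).card) :
    ((Finset.univ.filter
        (fun z : Fin d → ZMod 4 => ∀ i, z i ≠ a i ∧ z i ≠ b i)).card : ℝ) =
      ((3 : ℝ) / 2) ^ μ * 2 ^ d ∧
    (2 : ℝ) ^ d + 2 ^ (d - 1) * μ ≤ ((3 : ℝ) / 2) ^ μ * 2 ^ d ∧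
    (((3 : ℝ) / 2) ^ μ * 2 ^ d = 2 ^ d + 2 ^ (d - 1) * μ ↔ μ = 0 ∨ μ = 1) := by
  obtain ⟨i0, hi0⟩ := hab
  have hd : 0 < d := i0.pos
  -- μ ≤ d and count of unequal coords
  have hsplit := Finset.card_filter_add_card_filter_not
    (s := (Finset.univ : Finset (Fin d))) (p := fun i => a i = b i)
  simp only [Finset.card_univ, Fintype.card_fin] at hsplit
  rw [← hμ] at hsplit
  have hμd : μ ≤ d := by omega
  -- the counting identity
  have hset : Finset.univ.filter
      (fun z : Fin d → ZMod 4 => ∀ i, z i ≠ a i ∧ z i ≠ b i) = Fintype.piFinset (fun i => Finset.univ.filter (fun x => x ≠ a i ∧ x ≠ b i)) := by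
    ext z; simp [Fintype.mem_piFinset]
  have hcard : ∀ i : Fin d, (Finset.univ.filter (fun x => x ≠ a i ∧ x ≠ b i)).card = if a i = b i then 3 else 2 := by
    intro i
    have hSi : Finset.univ.filter (fun x => x ≠ a i ∧ x ≠ b i) = ({a i, b i} : Finset (ZMod 4))ᶜ := by
      ext x; simp [not_or]
    rw [hSi, Finset.card_compl, ZMod.card]
    by_cases h : a i = b i
    · simp [h]
    · rw [Finset.card_pair h]; simp [h]
  have hN : (Finset.univ.filter
      (fun z : Fin d → ZMod 4 => ∀ i, z i ≠ a i ∧ z i ≠ b i)).card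
        = 3 ^ μ * 2 ^ (d - μ) := by
    rw [hset, Fintype.card_piFinset]
    rw [Finset.prod_congr rfl (fun i _ => hcard i), Finset.prod_ite,
      Finset.prod_const, Finset.prod_const, ← hμ]
    congr 1
    congr 1
    omega
  have h2d : (2:ℝ)^d = 2^μ * 2^(d-μ) := by
    rw [← pow_add, Nat.add_sub_cancel' hμd]
  have hreal : ((3:ℝ)/2)^μ * 2^d = 3^μ * 2^(d-μ) := by
    rw [div_pow, h2d]
    field_simp
  have heq1 : ((Finset.univ.filter
      (fun z : Fin d → ZMod 4 => ∀ i, z i ≠ a i ∧ z i ≠ b i)).card : ℝ)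
        = ((3:ℝ)/2)^μ * 2^d := by
    rw [hN, hreal]; push_cast; ring
  have hpow : (2:ℝ)^(d-1) = 2^d / 2 := by
    obtain ⟨e, rfl⟩ : ∃ e, d = e + 1 := ⟨d - 1, (Nat.succ_pred_eq_of_pos hd).symm⟩
    simp [pow_succ]
  have hles : (1:ℝ) + μ * (1/2) ≤ (3/2)^μ := by
    have := one_add_mul_le_pow (a := (1/2 : ℝ)) (by norm_num) μ
    norm_num at this ⊢
    convert this using 2
  have h2dpos : (0:ℝ) < 2^d := by positivity
  refine ⟨heq1, ?_, ?_⟩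
  · rw [hpow]; nlinarith
  · constructor
    · intro heq
      by_contra hcon
      push_neg at hcon
      obtain ⟨h0, h1⟩ := hcon
      have hμ2 : 2 ≤ μ := (Nat.two_le_iff μ).mpr ⟨h0, h1⟩
      have := strict_aux μ hμ2
      rw [hpow] at heq
      nlinarith
    · rintro (h | h) <;> subst h <;> rw [hpow] <;> ring
end
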